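/- Let a,b,c,d be nonzero complex numbers and set ζ = cd/(ab). Then the identity R₀₂R₀₁q₁ + (a+b) q₁R₀₁ = A₀²R₀₁ + R₀₂A₀¹ of linear maps V₀⊗ℂ² → V₀⊗ℂ²⊗ℂ² holds if and only if (a²+ab)(b²+ab) = (c²+ab)(d²+ab). -/

import Mathlib

open scoped BigOperators

noncomputable section

namespace EightVertex

/-- Spin configurations of a chain of length `L`: `0` is spin up, `1` is spin down. -/
abbrev Cfg (L : ℕ) := Fin L → Fin 2

/-- The Hilbert space `V^L = (ℂ²)^{⊗L}`, with its canonical orthonormal basis indexed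
by spin configurations and the standard Hermitian inner product (conjugate-linear in
the first argument). -/
abbrev V (L : ℕ) := EuclideanSpace ℂ (Cfg L)

/-- The canonical basis state `|s₁ ⋯ s_L⟩`. -/
def bs {L : ℕ} (s : Cfg L) : V L := EuclideanSpace.single s 1

/-- The all-spins-up basis state `|↑⋯↑⟩`. -/
def allUp (L : ℕ) : V L := bs (fun _ => 0)

/-- Cyclic successor on `Fin L`. -/
def cyc {L : ℕ} (j : Fin L) : Fin L := ⟨((j : ℕ) + 1) % L, Nat.mod_lt _ j.pos⟩

/-- Matrix of the translation operator `S`: `S|s₁⋯s_L⟩ = |s_L s₁ ⋯ s_{L-1}⟩`. -/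
def Smat (L : ℕ) : Matrix (Cfg L) (Cfg L) ℂ :=
  fun s' s => if (∀ j, s' (cyc j) = s j) then 1 else 0

/-- The translation operator `S` on `V^L`. -/
def Sop (L : ℕ) : V L →ₗ[ℂ] V L := Matrix.toEuclideanLin (Smat L)

/-- The subspace `W^L ⊆ V^L` of alternate-cyclic states: the eigenspace of the
translation operator with eigenvalue `(-1)^{L+1}`. -/
def W (L : ℕ) : Submodule ℂ (V L) :=
  Module.End.eigenspace (Sop L : Module.End ℂ (V L)) ((-1 : ℂ) ^ (L + 1))

def sigmaX : Matrix (Fin 2) (Fin 2) ℂ := !![0, 1; 1, 0]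
def sigmaY : Matrix (Fin 2) (Fin 2) ℂ := !![0, -Complex.I; Complex.I, 0]
def sigmaZ : Matrix (Fin 2) (Fin 2) ℂ := !![1, 0; 0, -1]

/-- The one-site operator `A_j` acting on site `j` of the chain. -/
def site {L : ℕ} (A : Matrix (Fin 2) (Fin 2) ℂ) (j : Fin L) : Matrix (Cfg L) (Cfg L) ℂ :=
  fun s' s => A (s' j) (s j) * ∏ k ∈ Finset.univ.erase j, (if s' k = s k then (1 : ℂ) else 0)

/-- Matrix of the periodic XYZ Hamiltonian
`H = -(1/2) ∑_j (Jx σ^x_j σ^x_{j+1} + Jy σ^y_j σ^y_{j+1} + Jz σ^z_j σ^z_{j+1})`. -/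
def HxyzMat (Jx Jy Jz : ℝ) (L : ℕ) : Matrix (Cfg L) (Cfg L) ℂ :=
  (-(1/2) : ℂ) • ∑ j : Fin L,
    ((Jx : ℂ) • (site sigmaX j * site sigmaX (cyc j)) +
     (Jy : ℂ) • (site sigmaY j * site sigmaY (cyc j)) +
     (Jz : ℂ) • (site sigmaZ j * site sigmaZ (cyc j)))

/-- The periodic XYZ Hamiltonian on `V^L`. -/
def Hxyz (Jx Jy Jz : ℝ) (L : ℕ) : V L →ₗ[ℂ] V L := Matrix.toEuclideanLin (HxyzMat Jx Jy Jz L)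

/-- The XYZ Hamiltonian with the supersymmetric anisotropy parameters
`Jx = 1+ζ`, `Jy = 1-ζ`, `Jz = (ζ²-1)/2`. -/
def HxyzSusy (ζ : ℝ) (L : ℕ) : V L →ₗ[ℂ] V L :=
  Hxyz (1 + ζ) (1 - ζ) ((ζ ^ 2 - 1) / 2) L

/-- The ground-state energy `E₀ = -(2n+1)(3+ζ²)/4`. -/
def E0 (n : ℕ) (ζ : ℝ) : ℝ := -(2 * (n : ℝ) + 1) * (3 + ζ ^ 2) / 4

/-- Matrix of the spin-parity operator `P = (-1)^L σ^z_1 ⋯ σ^z_L`. -/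
def Pmat (L : ℕ) : Matrix (Cfg L) (Cfg L) ℂ :=
  fun s' s => if s' = s then (-1 : ℂ) ^ L * ∏ j, (if s j = 0 then (1 : ℂ) else -1) else 0

/-- The spin-parity operator `P` on `V^L`. -/
def Pop (L : ℕ) : V L →ₗ[ℂ] V L := Matrix.toEuclideanLin (Pmat L)

/-- Spin flip on a single site. -/
def flip : Fin 2 → Fin 2 := fun x => if x = 0 then 1 else 0

/-- Matrix of the spin-reversal operator `R = σ^x_1 ⋯ σ^x_L`. -/
def Rrevmat (L : ℕ) : Matrix (Cfg L) (Cfg L) ℂ :=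
  fun s' s => if (∀ j, s' j = flip (s j)) then 1 else 0

/-- The spin-reversal operator `R` on `V^L`. -/
def Rrev (L : ℕ) : V L →ₗ[ℂ] V L := Matrix.toEuclideanLin (Rrevmat L)

/-- Entries of the eight-vertex `R`-matrix with weights `a,b,c,d`.  In each pair the
first component is the auxiliary-space index, the second one the physical index;
the first argument is the outgoing pair, the second the incoming pair.  In the
ordered basis `↑↑, ↑↓, ↓↑, ↓↓` its rows are `(a,0,0,d), (0,b,c,0), (0,c,b,0), (d,0,0,a)`. -/
def Rv (a b c d : ℂ) : Fin 2 × Fin 2 → Fin 2 × Fin 2 → ℂ := fun o i =>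
  if o = i then (if o.1 = o.2 then a else b)
  else if o.1 = i.2 ∧ o.2 = i.1 ∧ i.1 ≠ i.2 then c
  else if o.1 = o.2 ∧ i.1 = i.2 ∧ o.1 ≠ i.1 then d
  else 0

/-- Matrix of the transfer matrix `T = tr₀(R₀L ⋯ R₀1)` of the eight-vertex model. -/
def Tmat (a b c d : ℂ) (L : ℕ) : Matrix (Cfg L) (Cfg L) ℂ :=
  fun s' s => ∑ t : Cfg L, ∏ j : Fin L, Rv a b c d (t (cyc j), s' j) (t j, s j)

/-- The transfer matrix `T` of the eight-vertex model on `V^L`. -/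
def Top (a b c d : ℂ) (L : ℕ) : V L →ₗ[ℂ] V L := Matrix.toEuclideanLin (Tmat a b c d L)

/-- Entries of the local supercharge `q(ζ) : ℂ² → ℂ² ⊗ ℂ²`, `q|↑⟩ = 0`,
`q|↓⟩ = |↑↑⟩ - ζ|↓↓⟩`; arguments: incoming spin, the two outgoing spins. -/
def qloc (ζ : ℂ) (si o1 o2 : Fin 2) : ℂ :=
  if si = 1 then
    (if o1 = 0 ∧ o2 = 0 then 1 else if o1 = 1 ∧ o2 = 1 then -ζ else 0)
  else 0

/-- Position of site `k` of the original chain after insertion of one site at `j`. -/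
def insIdx {L : ℕ} (j k : Fin L) : Fin (L + 1) :=
  if (k : ℕ) < (j : ℕ) then k.castSucc else k.succ

/-- Matrix of the local supercharge `q_j : V^L → V^{L+1}` acting on the `j`-th site
(`j : Fin L` corresponds to the paper's `j+1 ∈ {1,…,L}`). -/
def qjMat (ζ : ℂ) {L : ℕ} (j : Fin L) : Matrix (Cfg (L + 1)) (Cfg L) ℂ :=
  fun s' s => qloc ζ (s j) (s' j.castSucc) (s' j.succ) *
    ∏ k ∈ Finset.univ.erase j, (if s' (insIdx j k) = s k then (1 : ℂ) else 0)

/-- Matrix of `∑_{j=0}^{L} (-1)^j q_j`, where `q_0 = S q_L`. -/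
def QsumMat (ζ : ℂ) : (L : ℕ) → Matrix (Cfg (L + 1)) (Cfg L) ℂ
  | 0 => 0
  | (M + 1) =>
      Smat (M + 2) * qjMat ζ (Fin.last M) +
      ∑ j : Fin (M + 1), ((-1 : ℂ) ^ ((j : ℕ) + 1)) • qjMat ζ j

/-- The supercharge `Q(ζ) : V^L → V^{L+1}`: it acts as
`√(L/(L+1)) ∑_{j=0}^L (-1)^j q_j` on the alternate-cyclic subspace `W^L` and as zero
on the other eigenspaces of the translation operator (equivalently, on the orthogonal
complement of `W^L`, since `S` is unitary). -/
def Qsc (ζ : ℝ) (L : ℕ) : V L →ₗ[ℂ] V (L + 1) :=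
  (Real.sqrt ((L : ℝ) / ((L : ℝ) + 1)) : ℂ) •
    ((Matrix.toEuclideanLin (QsumMat (ζ : ℂ) L)) ∘ₗ
      ((W L).subtype ∘ₗ ((W L).orthogonalProjectionOnto).toLinearMap))

/-- The adjoint supercharge `Q(ζ)† : V^L → V^{L-1}`. -/
def Qadj (ζ : ℝ) : (L : ℕ) → (V L →ₗ[ℂ] V (L - 1))
  | 0 => 0
  | (K + 1) => LinearMap.adjoint (Qsc ζ K)

/-- Number of down spins of a configuration. -/
def nDown {L : ℕ} (s : Cfg L) : ℕ := (Finset.univ.filter fun j => s j = 1).card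

/-- The state `Φ_n(ζ) = ∑_{m=0}^{n} ζ^m ∑_{x₁<⋯<x_{2m+1}} ||x₁,…,x_{2m+1}⟩⟩`. -/
def Phi (ζ : ℝ) (n : ℕ) : V (2 * n + 1) :=
  ∑ s : Cfg (2 * n + 1),
    (if nDown s % 2 = 1 then ((ζ : ℂ) ^ (nDown s / 2)) else 0) • bs s

/-- The state `Φ̄_n(ζ) = ∑_{m=0}^{n} ζ^m ∑_{x₁<⋯<x_{2m}} ||x₁,…,x_{2m}⟩⟩`. -/
def PhiBar (ζ : ℝ) (n : ℕ) : V (2 * n + 1) :=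
  ∑ s : Cfg (2 * n + 1),
    (if nDown s % 2 = 0 then ((ζ : ℂ) ^ (nDown s / 2)) else 0) • bs s

/-- The index set for the space `V₀ ⊗ ℂ²` (auxiliary space and one physical site). -/
abbrev Pair := Fin 2 × Fin 2

/-- The index set for `V₀ ⊗ ℂ² ⊗ ℂ²` (auxiliary space and two physical sites). -/
abbrev Triple := Fin 2 × Fin 2 × Fin 2

/-- `q₁ = 1 ⊗ q : V₀ ⊗ ℂ² → V₀ ⊗ ℂ² ⊗ ℂ²`, the local supercharge applied to the
physical site. -/
def q1Mat (ζ : ℂ) : Matrix Triple Pair ℂ := fun o i =>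
  (if o.1 = i.1 then (1 : ℂ) else 0) * qloc ζ i.2 o.2.1 o.2.2

/-- `R₀₁` on `V₀ ⊗ ℂ²` (auxiliary space and the single physical site). -/
def R01dom (a b c d : ℂ) : Matrix Pair Pair ℂ := fun o i => Rv a b c d o i

/-- `R₀₁` on `V₀ ⊗ ℂ² ⊗ ℂ²` (acting on the auxiliary space and physical site 1). -/
def R01cod (a b c d : ℂ) : Matrix Triple Triple ℂ := fun o i =>
  Rv a b c d (o.1, o.2.1) (i.1, i.2.1) * (if o.2.2 = i.2.2 then (1 : ℂ) else 0)

/-- `R₀₂` on `V₀ ⊗ ℂ² ⊗ ℂ²` (acting on the auxiliary space and physical site 2). -/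
def R02cod (a b c d : ℂ) : Matrix Triple Triple ℂ := fun o i =>
  Rv a b c d (o.1, o.2.2) (i.1, i.2.2) * (if o.2.1 = i.2.1 then (1 : ℂ) else 0)

/-- Entries of the operator `A : ℂ² → ℂ² ⊗ ℂ²`,
`A|↑⟩ = d(-(c/a)|↑↓⟩ + |↓↑⟩)`, `A|↓⟩ = c(|↑↑⟩ - (d/b)|↓↓⟩)`. -/
def Aent (a b c d : ℂ) : Fin 2 × Fin 2 → Fin 2 → ℂ := fun o σ =>
  if σ = 0 then
    (if o = (0, 1) then -(d * c / a) else if o = (1, 0) then d else 0)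
  else
    (if o = (0, 0) then c else if o = (1, 1) then -(c * d / b) else 0)

/-- `A₀¹ : V₀ ⊗ ℂ² → V₀ ⊗ ℂ² ⊗ ℂ²`: `v₀ ⊗ w ↦ (A v₀) ⊗ w`, the first output factor
of `A` becoming the new auxiliary space and the second one physical site 1. -/
def A01 (a b c d : ℂ) : Matrix Triple Pair ℂ := fun o i =>
  Aent a b c d (o.1, o.2.1) i.1 * (if o.2.2 = i.2 then (1 : ℂ) else 0)

/-- `A₀² : V₀ ⊗ ℂ² → V₀ ⊗ ℂ² ⊗ ℂ²`: as `A₀¹`, but with the second output factor of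
`A` becoming physical site 2 (i.e. `A₀¹` followed by the swap of the two sites). -/
def A02 (a b c d : ℂ) : Matrix Triple Pair ℂ := fun o i =>
  Aent a b c d (o.1, o.2.2) i.1 * (if o.2.1 = i.2 then (1 : ℂ) else 0)

theorem q1Mat_zero_ne_zero : q1Mat 0 ≠ 0 := by
  intro h
  have h₁ := congrFun (congrFun h (0, 0, 0)) (0, 1)
  simp [q1Mat, qloc] at h₁

set_option maxHeartbeats 1000000 in
/-- Since `q1Mat 0 = 1 ⊗ |↑↑⟩⟨↓|`, this says that for `ζ = cd/(ab)` only the `|↑↑⟩` component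
of `q₁` survives in the difference of the two sides. -/
theorem supercharge_identity_defect (a b c d : ℂ) (ha : a ≠ 0) (hb : b ≠ 0) :
    R02cod a b c d * R01cod a b c d * q1Mat (c * d / (a * b)) +
        (a + b) • (q1Mat (c * d / (a * b)) * R01dom a b c d) =
      A02 a b c d * R01dom a b c d + R02cod a b c d * A01 a b c d +
        (a ^ 2 + a * b + b ^ 2 - c ^ 2 - d ^ 2 - c * d * (c * d / (a * b))) • q1Mat 0 := by
  ext ⟨x, y, z⟩ ⟨u, v⟩
  fin_cases x <;> fin_cases y <;> fin_cases z <;> fin_cases u <;> fin_cases v <;>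
    simp only [Matrix.mul_apply, Matrix.add_apply, Matrix.smul_apply, Fintype.sum_prod_type,
      Fin.sum_univ_two, q1Mat, R01dom, R01cod, R02cod, A01, A02, Rv, qloc, Aent,
      smul_eq_mul, Prod.ext_iff] <;> norm_num <;> field_simp <;> ring

theorem statement4_general (a b c d : ℂ) (ha : a ≠ 0) (hb : b ≠ 0) :
    (R02cod a b c d * R01cod a b c d * q1Mat (c * d / (a * b)) +
        (a + b) • (q1Mat (c * d / (a * b)) * R01dom a b c d) =
      A02 a b c d * R01dom a b c d + R02cod a b c d * A01 a b c d) ↔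
    (a ^ 2 + a * b) * (b ^ 2 + a * b) = (c ^ 2 + a * b) * (d ^ 2 + a * b) := by
  have hab : a * b ≠ 0 := mul_ne_zero ha hb
  have coeff_mul : (a ^ 2 + a * b + b ^ 2 - c ^ 2 - d ^ 2 - c * d * (c * d / (a * b))) * (a * b) =
      (a ^ 2 + a * b) * (b ^ 2 + a * b) - (c ^ 2 + a * b) * (d ^ 2 + a * b) := by
    field_simp
    ring
  rw [supercharge_identity_defect a b c d ha hb, add_eq_left, smul_eq_zero,
    or_iff_left q1Mat_zero_ne_zero, ← sub_eq_zero (a := (a ^ 2 + a * b) * (b ^ 2 + a * b)),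
    ← coeff_mul, mul_eq_zero, or_iff_left hab]

/-- Lemma 3.3.  For nonzero complex weights and `ζ = cd/(ab)`, the
identity `R₀₂R₀₁q₁ + (a+b) q₁R₀₁ = A₀²R₀₁ + R₀₂A₀¹` holds if and only if
`(a²+ab)(b²+ab) = (c²+ab)(d²+ab)`. -/
theorem statement4 (a b c d : ℂ) (ha : a ≠ 0) (hb : b ≠ 0) (hc : c ≠ 0) (hd : d ≠ 0) :
    (R02cod a b c d * R01cod a b c d * q1Mat (c * d / (a * b)) +
        (a + b) • (q1Mat (c * d / (a * b)) * R01dom a b c d) =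
      A02 a b c d * R01dom a b c d + R02cod a b c d * A01 a b c d) ↔
    (a ^ 2 + a * b) * (b ^ 2 + a * b) = (c ^ 2 + a * b) * (d ^ 2 + a * b) :=
  statement4_general a b c d ha hb

end EightVertex
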